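/- arXiv:1602.05669 — 5 statements merged into one kernel-verified Lean document; each statement's English description precedes it below -/
import Mathlib

section
/- Let I be a proper nonzero ideal of S with √I = m. Then for all sufficiently large q = p^e, (n+1)q − M_q(I) = reg(S/I) + (n+1). -/
/-!
STATEMENT 3: Let `I` be a proper nonzero ideal of `S = k[x_0, …, x_n]` (char `k = p > 0`)
with `√I = m`. Then for all sufficiently large `q = p^e`,
`(n+1)q − M_q(I) = reg(S/I) + (n+1)`, where
`M_q(I) = max{ℓ ≥ 0 : (m^{[q]} : I) ⊆ m^{[q]} + m^ℓ}` and `reg(S/I)` is the largest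
integer `a` such that `m^a ⊄ I`.
-/

noncomputable section

open MvPolynomial

/-- The homogeneous maximal ideal `m = (x_0, …, x_n)` of `k[x_0, …, x_n]`. -/
def maxIdeal (k : Type) [Field k] (n : ℕ) : Ideal (MvPolynomial (Fin (n + 1)) k) :=
  Ideal.span (Set.range MvPolynomial.X)

/-- The `q`-th bracket (Frobenius) power `I^{[q]}` of an ideal. -/
def brk {R : Type} [CommRing R] (I : Ideal R) (q : ℕ) : Ideal R :=
  Ideal.span ((fun a => a ^ q) '' (I : Set R))

/-- `M_q(I) = max{ℓ ≥ 0 : (m^{[q]} : I) ⊆ m^{[q]} + m^ℓ}`. -/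
def Mq (k : Type) [Field k] (n : ℕ) (I : Ideal (MvPolynomial (Fin (n + 1)) k)) (q : ℕ) : ℕ :=
  sSup {ℓ : ℕ | Submodule.colon (brk (maxIdeal k n) q) I ≤
    brk (maxIdeal k n) q ⊔ (maxIdeal k n) ^ ℓ}

/-- `reg(S/I)`: the largest integer `a` such that `m^a ⊄ I` (for `I` containing a power
of `m`). -/
def reg (k : Type) [Field k] (n : ℕ) (I : Ideal (MvPolynomial (Fin (n + 1)) k)) : ℕ :=
  sSup {a : ℕ | ¬ (maxIdeal k n) ^ a ≤ I}

/-!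
Write `q = p^e`, `s = (n+1)(q-1)` and `r = reg(S/I)`, so that `m^(r+1) ⊆ I ⊉ m^r`, and
`m^[q] ⊆ I` once `q > r`. Membership in the monomial ideal `m^[q] + m^ℓ` is read off supports,
and `M_q(I) = s - r`:
* if `u · m^(r+1) ⊆ m^[q]`, a monomial `x^μ` of `u` outside `m^[q]` has degree `≥ s - r`, since
  otherwise a monomial of degree `r + 1` would move it into the box `{ν | ∀ i, ν i < q}`;
* conversely (Macaulay duality), take a monomial `x^α ∉ I` of degree `r` and a `k`-linear `ψ`
  vanishing on `I` with `ψ(x^α) ≠ 0`. With `g = (q-1, …, q-1)`, the polynomial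
  `u = ∑_{μ ≤ g} ψ(x^(g-μ)) x^μ` lies in `(m^[q] : I)` and contains `x^(g-α)`, of degree `s - r`.
-/

namespace MvPolynomial

open Finsupp

variable {σ R : Type*}

section CommSemiring

variable [CommSemiring R]

variable (σ R) in
abbrev varPowIdeal (q : ℕ) : Ideal (MvPolynomial σ R) :=
  Ideal.span (Set.range fun i => X i ^ q)

theorem varPowIdeal_eq_span_monomial (q : ℕ) :
    varPowIdeal σ R q = Ideal.span ((monomial · 1) '' Set.range fun i => single i q) := by
  simp only [varPowIdeal, ← Set.range_comp, Function.comp_def, X_pow_eq_monomial]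

theorem mem_varPowIdeal_iff {q : ℕ} {f : MvPolynomial σ R} :
    f ∈ varPowIdeal σ R q ↔ ∀ μ ∈ f.support, ∃ i, q ≤ μ i := by
  simp [varPowIdeal_eq_span_monomial, mem_ideal_span_monomial_image, single_le_iff]

theorem mem_varPowIdeal_sup_pow_idealOfVars_iff {q ℓ : ℕ} {f : MvPolynomial σ R} :
    f ∈ varPowIdeal σ R q ⊔ idealOfVars σ R ^ ℓ ↔
      ∀ μ ∈ f.support, (∃ i, q ≤ μ i) ∨ ℓ ≤ degree μ := by
  rw [varPowIdeal_eq_span_monomial, pow_idealOfVars_eq_span, ← Ideal.span_union,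
    ← Set.image_union, mem_ideal_span_monomial_image]
  refine forall₂_congr fun μ _ => ⟨?_, ?_⟩
  · rintro ⟨ν, ⟨i, rfl⟩ | hν, hνμ⟩
    · exact .inl ⟨i, by simpa using hνμ i⟩
    · exact .inr (hν ▸ degree_mono hνμ)
  · rintro (⟨i, hi⟩ | hμ)
    · exact ⟨single i q, .inl ⟨i, rfl⟩, single_le_iff.mpr hi⟩
    · obtain ⟨ν, hνμ, hν⟩ := exists_le_degree_eq μ ℓ hμ
      exact ⟨ν, .inr hν, hνμ⟩

theorem varPowIdeal_le_pow_idealOfVars (q : ℕ) : varPowIdeal σ R q ≤ idealOfVars σ R ^ q := by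
  rw [Ideal.span_le, Set.range_subset_iff]
  exact fun i => Ideal.pow_mem_pow (Ideal.subset_span (Set.mem_range_self i)) q

end CommSemiring

theorem brk_idealOfVars {σ R : Type} [CommRing R] (p e : ℕ) [ExpChar R p] :
    brk (idealOfVars σ R) (p ^ e) = varPowIdeal σ R (p ^ e) := by
  change (idealOfVars σ R).map (iterateFrobenius _ p e) = _
  rw [Ideal.map_span, ← Set.range_comp]
  rfl

theorem _root_.Finsupp.degree_tsub_of_le {μ ν : σ →₀ ℕ} (h : ν ≤ μ) :
    degree (μ - ν) = degree μ - degree ν := by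
  have := congrArg degree (tsub_add_cancel_of_le h)
  rw [map_add] at this
  omega

section Socle

variable [Fintype σ]

variable (σ) in
def socleExponent (q : ℕ) : σ →₀ ℕ := equivFunOnFinite.symm fun _ => q - 1

@[simp]
theorem socleExponent_apply (q : ℕ) (i : σ) : socleExponent σ q i = q - 1 := rfl

theorem le_socleExponent_iff {q : ℕ} (hq : 0 < q) {μ : σ →₀ ℕ} :
    μ ≤ socleExponent σ q ↔ ∀ i, μ i < q := by
  simp only [Finsupp.le_def, socleExponent_apply]
  exact forall_congr' fun i => by omega

theorem degree_socleExponent (q : ℕ) :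
    degree (socleExponent σ q) = Fintype.card σ * (q - 1) := by
  simp [degree_eq_sum]

theorem mem_varPowIdeal_sup_of_mul_pow_mem [CommSemiring R] {q t : ℕ} (hq : 0 < q)
    {u : MvPolynomial σ R} (hu : ∀ w ∈ idealOfVars σ R ^ t, u * w ∈ varPowIdeal σ R q) :
    u ∈ varPowIdeal σ R q ⊔ idealOfVars σ R ^ (Fintype.card σ * (q - 1) + 1 - t) := by
  rw [mem_varPowIdeal_sup_pow_idealOfVars_iff]
  intro μ hμ
  by_contra! ⟨hμq, hμdeg⟩
  have hμg : μ ≤ socleExponent σ q := (le_socleExponent_iff hq).mpr hμq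
  obtain ⟨ν, hν, hνdeg⟩ := exists_le_degree_eq (socleExponent σ q - μ) t
    (by rw [degree_tsub_of_le hμg, degree_socleExponent]; omega)
  have hν_mem : monomial ν (1 : R) ∈ idealOfVars σ R ^ t :=
    (mem_pow_idealOfVars_iff _ _).mpr fun x hx =>
      (Finset.mem_singleton.mp (support_monomial_subset hx)) ▸ hνdeg.ge
  obtain ⟨i, hi⟩ := mem_varPowIdeal_iff.mp (hu _ hν_mem) (μ + ν)
    (by rwa [mem_support_iff, coeff_mul_monomial, mul_one, ← mem_support_iff])
  exact hi.not_gt ((le_socleExponent_iff hq).mp ((le_tsub_iff_left hμg).mp hν) i)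

end Socle

section MacaulayDual

variable [Fintype σ] [DecidableEq σ] [CommSemiring R]

def macaulayDual (ψ : MvPolynomial σ R →ₗ[R] R) (q : ℕ) : MvPolynomial σ R :=
  ∑ μ ∈ Finset.Iic (socleExponent σ q), monomial μ (ψ (monomial (socleExponent σ q - μ) 1))

variable {ψ : MvPolynomial σ R →ₗ[R] R} {q : ℕ}

theorem coeff_macaulayDual (μ : σ →₀ ℕ) :
    coeff μ (macaulayDual ψ q) =
      if μ ≤ socleExponent σ q then ψ (monomial (socleExponent σ q - μ) 1) else 0 := by
  simp [macaulayDual, coeff_sum, coeff_monomial]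

theorem coeff_macaulayDual_mul (hψ : ∀ w ∈ varPowIdeal σ R q, ψ w = 0) {τ : σ →₀ ℕ}
    (hτ : τ ≤ socleExponent σ q) (w : MvPolynomial σ R) :
    coeff τ (macaulayDual ψ q * w) = ψ (monomial (socleExponent σ q - τ) 1 * w) := by
  induction w using MvPolynomial.induction_on' with
  | monomial ν c =>
    rw [coeff_mul_monomial', monomial_mul, one_mul]
    split_ifs with hντ
    · rw [coeff_macaulayDual, if_pos (tsub_le_self.trans hτ), tsub_tsub_assoc hτ hντ,
        mul_comm, ← smul_eq_mul, ← map_smul, smul_monomial, smul_eq_mul, mul_one]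
    · refine (hψ _ (mem_varPowIdeal_iff.mpr fun μ hμ => ?_)).symm
      obtain rfl := Finset.mem_singleton.mp (support_monomial_subset hμ)
      obtain ⟨i, hi⟩ : ∃ i, τ i < ν i := by simpa [Finsupp.le_def] using hντ
      have := hτ i
      refine ⟨i, ?_⟩
      simp only [Finsupp.add_apply, Finsupp.tsub_apply, socleExponent_apply] at this ⊢
      omega
  | add w₁ w₂ h₁ h₂ => rw [mul_add, coeff_add, h₁, h₂, mul_add, map_add]

theorem macaulayDual_mem_colon (hq : 0 < q) {I : Ideal (MvPolynomial σ R)}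
    (hqI : varPowIdeal σ R q ≤ I) (hψ : ∀ w ∈ I, ψ w = 0) :
    macaulayDual ψ q ∈ (varPowIdeal σ R q).colon (I : Set (MvPolynomial σ R)) := by
  refine Submodule.mem_colon.mpr fun w hw => mem_varPowIdeal_iff.mpr fun τ hτ => ?_
  by_contra! h
  rw [mem_support_iff, smul_eq_mul, coeff_macaulayDual_mul (fun w hw => hψ w (hqI hw))
    ((le_socleExponent_iff hq).mpr h), hψ _ (I.mul_mem_left _ hw)] at hτ
  exact hτ rfl

theorem macaulayDual_notMem (hq : 0 < q) {α : σ →₀ ℕ} {ℓ : ℕ} (hα : α ≤ socleExponent σ q)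
    (hψα : ψ (monomial α 1) ≠ 0) (hℓ : degree (socleExponent σ q - α) < ℓ) :
    macaulayDual ψ q ∉ varPowIdeal σ R q ⊔ idealOfVars σ R ^ ℓ := by
  have hcoeff : coeff (socleExponent σ q - α) (macaulayDual ψ q) = ψ (monomial α 1) := by
    rw [coeff_macaulayDual, if_pos tsub_le_self, tsub_tsub_cancel_of_le hα]
  rw [mem_varPowIdeal_sup_pow_idealOfVars_iff]
  intro h
  rcases h _ (mem_support_iff.mpr (hcoeff ▸ hψα)) with ⟨i, hi⟩ | h
  · simp only [tsub_apply, socleExponent_apply] at hi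
    omega
  · omega

end MacaulayDual

theorem exists_monomial_notMem_of_not_pow_idealOfVars_le [CommSemiring R]
    {I : Ideal (MvPolynomial σ R)} {r : ℕ} (h : ¬ idealOfVars σ R ^ r ≤ I) :
    ∃ α : σ →₀ ℕ, degree α = r ∧ monomial α (1 : R) ∉ I := by
  contrapose! h
  rw [pow_idealOfVars_eq_span, Ideal.span_le]
  rintro _ ⟨α, hα, rfl⟩
  exact h α hα

theorem colon_le_varPowIdeal_sup_pow_iff {k : Type*} [Field k] [Fintype σ] [DecidableEq σ]
    {I : Ideal (MvPolynomial σ k)} {r q ℓ : ℕ} (hrq : r < q)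
    (hr : ¬ idealOfVars σ k ^ r ≤ I) (hr1 : idealOfVars σ k ^ (r + 1) ≤ I) :
    (varPowIdeal σ k q).colon (I : Set (MvPolynomial σ k)) ≤
        varPowIdeal σ k q ⊔ idealOfVars σ k ^ ℓ ↔
      ℓ ≤ Fintype.card σ * (q - 1) - r := by
  have hq : 0 < q := by omega
  constructor
  · intro hle
    by_contra! hℓ
    obtain ⟨α, hαdeg, hαI⟩ := exists_monomial_notMem_of_not_pow_idealOfVars_le hr
    obtain ⟨ψ, hψα, hψI⟩ :=
      Submodule.exists_dual_map_eq_bot_of_notMem (p := I.restrictScalars k) hαI inferInstance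
    have hα : α ≤ socleExponent σ q := (le_socleExponent_iff hq).mpr fun i =>
      (le_degree i α).trans_lt (hαdeg ▸ hrq)
    have hqI : varPowIdeal σ k q ≤ I :=
      (varPowIdeal_le_pow_idealOfVars q).trans ((Ideal.pow_le_pow_right hrq).trans hr1)
    refine macaulayDual_notMem hq hα hψα ?_ (hle (macaulayDual_mem_colon hq hqI ?_))
    · rw [degree_tsub_of_le hα, degree_socleExponent, hαdeg]
      omega
    · exact fun w hw => LinearMap.le_ker_iff_map.mpr hψI hw
  · intro hℓ u hu
    have hu' := mem_varPowIdeal_sup_of_mul_pow_mem (t := r + 1) hq fun w hw =>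
      Submodule.mem_colon.mp hu w (hr1 hw)
    have hpow : idealOfVars σ k ^ (Fintype.card σ * (q - 1) + 1 - (r + 1)) ≤
        idealOfVars σ k ^ ℓ :=
      Ideal.pow_le_pow_right (by omega)
    exact sup_le_sup_left hpow _ hu'

end MvPolynomial

theorem maxIdeal_eq_idealOfVars (k : Type) [Field k] (n : ℕ) :
    maxIdeal k n = idealOfVars (Fin (n + 1)) k := rfl

theorem not_pow_reg_le_and_pow_reg_succ_le {k : Type} [Field k] {n : ℕ}
    {I : Ideal (MvPolynomial (Fin (n + 1)) k)} (hI : I ≠ ⊤) (hrad : I.radical = maxIdeal k n) :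
    ¬ maxIdeal k n ^ reg k n I ≤ I ∧ maxIdeal k n ^ (reg k n I + 1) ≤ I := by
  obtain ⟨N, hN⟩ : ∃ N, maxIdeal k n ^ N ≤ I :=
    Ideal.exists_pow_le_of_le_radical_of_fg hrad.ge (idealOfVars_fg _ _)
  have hbdd : BddAbove {a | ¬ maxIdeal k n ^ a ≤ I} :=
    ⟨N, fun a ha => not_lt.mp fun hNa => ha ((Ideal.pow_le_pow_right hNa.le).trans hN)⟩
  have hzero : 0 ∈ {a | ¬ maxIdeal k n ^ a ≤ I} := by
    simpa [Ideal.one_eq_top, top_le_iff] using hI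
  refine ⟨Nat.sSup_mem ⟨0, hzero⟩ hbdd, ?_⟩
  by_contra h
  exact (le_csSup hbdd h).not_gt (Nat.lt_succ_self _)

theorem Mq_eq {k : Type} [Field k] (p : ℕ) [ExpChar k p] {n : ℕ}
    {I : Ideal (MvPolynomial (Fin (n + 1)) k)} {r e : ℕ} (hr : ¬ maxIdeal k n ^ r ≤ I)
    (hr1 : maxIdeal k n ^ (r + 1) ≤ I) (hre : r < p ^ e) :
    Mq k n I (p ^ e) = (n + 1) * (p ^ e - 1) - r := by
  rw [Mq, maxIdeal_eq_idealOfVars, brk_idealOfVars]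
  simp_rw [colon_le_varPowIdeal_sup_pow_iff hre hr hr1, Fintype.card_fin]
  exact csSup_Iic

theorem stmt3_general (k : Type) [Field k] (p : ℕ) [Fact p.Prime] [CharP k p] (n : ℕ)
    (I : Ideal (MvPolynomial (Fin (n + 1)) k)) (hI : I ≠ ⊤)
    (hrad : I.radical = maxIdeal k n) :
    ∃ e₀ : ℕ, ∀ e ≥ e₀,
      ((n : ℤ) + 1) * (p : ℤ) ^ e - (Mq k n I (p ^ e) : ℤ) =
        (reg k n I : ℤ) + ((n : ℤ) + 1) := by
  have hp : p.Prime := Fact.out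
  obtain ⟨hr, hr1⟩ := not_pow_reg_le_and_pow_reg_succ_le hI hrad
  refine ⟨reg k n I, fun e he => ?_⟩
  have hre : reg k n I < p ^ e :=
    (Nat.lt_pow_self hp.one_lt).trans_le (Nat.pow_le_pow_right hp.pos he)
  have hrs : reg k n I ≤ (n + 1) * (p ^ e - 1) :=
    (Nat.le_sub_one_of_lt hre).trans (Nat.le_mul_of_pos_left _ n.succ_pos)
  rw [Mq_eq p hr hr1 hre, Nat.cast_sub hrs, Nat.cast_mul, Nat.cast_sub hre.pos]
  push_cast
  ring

theorem stmt3 (k : Type) [Field k] (p : ℕ) [Fact p.Prime] [CharP k p] (n : ℕ)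
    (I : Ideal (MvPolynomial (Fin (n + 1)) k)) (hI : I ≠ ⊤) (hI0 : I ≠ ⊥)
    (hrad : I.radical = maxIdeal k n) :
    ∃ e₀ : ℕ, ∀ e ≥ e₀,
      ((n : ℤ) + 1) * (p : ℤ) ^ e - (Mq k n I (p ^ e) : ℤ) =
        (reg k n I : ℤ) + ((n : ℤ) + 1) :=
  stmt3_general k p n I hI hrad
end
end

section
/- Let I be a proper nonzero homogeneous ideal of S such that m^ℓ ⊄ I for every positive integer ℓ. Then for every integer N there exists q = p^e with (n+1)q − M_q(I) > N; that is, the sequence {(n+1)q − M_q(I)} over powers q of p is unbounded above. -/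
/-!
Let `q = p^e ≥ 2` and `t = (q-1, …, q-1)`, so that `x^t` spans the socle of `S/m^{[q]}`.
Because `I` is homogeneous and `m^{q-1} ⊄ I`, the degree `q-1` part of `I` is a proper subspace of
`S_{q-1}`, hence killed by a nonzero functional `c`. Put `g = ∑_b c_b x^{t-b}` over the monomials
`x^b` of degree `q-1`. For `f ∈ I` and `a ≤ t`, the coefficient of `x^a` in `g f` is the
coefficient of `x^t` in `g · x^{t-a} f`, i.e. `c` evaluated on the degree `q-1` part of
`x^{t-a} f ∈ I`, which is `0`; so `g ∈ (m^{[q]} : I)`. But `g` is homogeneous of degree `n(q-1)`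
with a nonzero coefficient at a monomial outside `m^{[q]}`, so `g ∉ m^{[q]} + m^{n(q-1)+1}`.
Therefore `M_q(I) ≤ n(q-1)` and `(n+1)q - M_q(I) ≥ q + n`.
-/

noncomputable section

open MvPolynomial

theorem Submodule.exists_ne_zero_dotProduct_eq_zero {k ι : Type} [Field k] [Fintype ι]
    {V : Submodule k (ι → k)} (hV : V ≠ ⊤) :
    ∃ c : ι → k, c ≠ 0 ∧ ∀ v ∈ V, c ⬝ᵥ v = 0 := by
  classical
  obtain ⟨ψ, hψ, hVψ⟩ := Submodule.exists_dual_map_eq_bot_of_lt_top hV.lt_top inferInstance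
  refine ⟨(dotProductEquiv k ι).symm ψ, by simpa using hψ, fun v hv => ?_⟩
  have hψv := Submodule.mem_map_of_mem (f := ψ) hv
  rwa [hVψ, Submodule.mem_bot, ← (dotProductEquiv k ι).apply_symm_apply ψ,
    dotProductEquiv_apply_apply] at hψv

section FrobeniusPower

variable {R : Type} [CommRing R] (p : ℕ) [ExpChar R p]

theorem brk_span (s : Set R) (e : ℕ) : brk (Ideal.span s) (p ^ e) = Ideal.span ((· ^ p ^ e) '' s) :=
  Ideal.map_span (iterateFrobenius R p e) s

theorem MvPolynomial.brk_idealOfVars_s4 {σ : Type} (e : ℕ) :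
    brk (idealOfVars σ R) (p ^ e) = Ideal.span (Set.range fun i => X i ^ p ^ e) := by
  rw [brk_span, ← Set.range_comp]
  rfl

end FrobeniusPower

section Monomial
variable {σ R : Type} [CommSemiring R]

theorem MvPolynomial.mem_span_X_pow_iff {q : ℕ} {f : MvPolynomial σ R} :
    f ∈ Ideal.span (Set.range fun i => X i ^ q) ↔ ∀ a, (∀ i, a i < q) → coeff a f = 0 := by
  have : (Set.range fun i => (X i : MvPolynomial σ R) ^ q) =
      (monomial · 1) '' Set.range fun i => Finsupp.single i q := by
    simp [← Set.range_comp, Function.comp_def, X_pow_eq_monomial]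
  rw [this, mem_ideal_span_monomial_image]
  simp only [Set.exists_range_iff, Finsupp.single_le_iff, mem_support_iff]
  exact forall_congr' fun a => not_imp_comm.trans (by simp only [not_exists, not_le])

theorem MvPolynomial.pow_idealOfVars_le {I : Ideal (MvPolynomial σ R)} {d : ℕ}
    (h : ∀ b : σ →₀ ℕ, b.degree = d → monomial b 1 ∈ I) : idealOfVars σ R ^ d ≤ I := by
  rw [pow_idealOfVars_eq_span, Ideal.span_le]
  rintro _ ⟨b, hb, rfl⟩
  exact h b hb

end Monomial

section InverseSystem

open Finsupp

variable {σ k : Type} [Field k]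

def coeffsOn (B : Finset (σ →₀ ℕ)) : MvPolynomial σ k →ₗ[k] (B → k) :=
  LinearMap.pi fun b => lcoeff k b.1

@[simp]
theorem coeffsOn_apply (B : Finset (σ →₀ ℕ)) (f : MvPolynomial σ k) (b : B) :
    coeffsOn B f b = coeff b.1 f :=
  rfl

theorem map_coeffsOn_degree_ne_top [Finite σ] {I : Ideal (MvPolynomial σ k)}
    (hhom : ∀ f ∈ I, ∀ i : ℕ, homogeneousComponent i f ∈ I) {d : ℕ}
    (hd : ¬ idealOfVars σ k ^ d ≤ I) :
    (I.restrictScalars k).map (coeffsOn (finite_of_degree_eq d).toFinset) ≠ ⊤ := by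
  classical
  intro htop
  refine hd (pow_idealOfVars_le fun b hb => ?_)
  have hbB : b ∈ (finite_of_degree_eq (σ := σ) d).toFinset := by simpa using hb
  obtain ⟨f, hfI, hf⟩ : Pi.single ⟨b, hbB⟩ 1 ∈ (I.restrictScalars k).map (coeffsOn _) :=
    htop ▸ Submodule.mem_top
  suffices homogeneousComponent d f = monomial b 1 from this ▸ hhom f hfI d
  refine MvPolynomial.ext _ _ fun a => ?_
  rw [coeff_homogeneousComponent, coeff_monomial]
  split_ifs with ha hab hab
  · subst hab
    simpa using congrFun hf ⟨b, hbB⟩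
  · have haB : a ∈ (finite_of_degree_eq (σ := σ) d).toFinset := by simpa using ha
    simpa [Pi.single_apply, Subtype.ext_iff, Ne.symm hab] using congrFun hf ⟨a, haB⟩
  · exact absurd (hab ▸ hb) ha
  · rfl

def socleDual (t : σ →₀ ℕ) (B : Finset (σ →₀ ℕ)) (c : B → k) : MvPolynomial σ k :=
  ∑ b : B, monomial (t - b.1) (c b)

section SocleDual

variable {t : σ →₀ ℕ} {B : Finset (σ →₀ ℕ)} (c : B → k)

theorem coeff_socleDual (hB : ∀ b ∈ B, b ≤ t) (b : B) :
    coeff (t - b.1) (socleDual t B c) = c b := by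
  classical
  rw [socleDual, coeff_sum, Finset.sum_eq_single b]
  · simp
  · intro b' _ hb'
    rw [coeff_monomial, if_neg]
    intro h
    apply hb'
    ext1
    rw [← tsub_tsub_cancel_of_le (hB _ b'.2), h, tsub_tsub_cancel_of_le (hB _ b.2)]
  · simp

theorem coeff_socleDual_mul (hB : ∀ b ∈ B, b ≤ t) (f : MvPolynomial σ k) :
    coeff t (socleDual t B c * f) = c ⬝ᵥ coeffsOn B f := by
  rw [socleDual, Finset.sum_mul, coeff_sum, dotProduct]
  refine Finset.sum_congr rfl fun b _ => ?_
  rw [coeff_monomial_mul', if_pos tsub_le_self, tsub_tsub_cancel_of_le (hB _ b.2), coeffsOn_apply]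

theorem coeff_socleDual_mul_eq_zero (hB : ∀ b ∈ B, b ≤ t) {I : Ideal (MvPolynomial σ k)}
    (hc : ∀ f ∈ I, c ⬝ᵥ coeffsOn B f = 0) {f : MvPolynomial σ k} (hf : f ∈ I) {a : σ →₀ ℕ}
    (ha : a ≤ t) : coeff a (socleDual t B c * f) = 0 := by
  have hshift : coeff a (socleDual t B c * f) =
      coeff t (socleDual t B c * (monomial (t - a) 1 * f)) := by
    rw [mul_left_comm, coeff_monomial_mul', if_pos tsub_le_self, one_mul,
      tsub_tsub_cancel_of_le ha]
  rw [hshift, coeff_socleDual_mul c hB]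
  exact hc _ (I.mul_mem_left _ hf)

end SocleDual

theorem exists_mem_colon_span_X_pow_notMem_sup [Fintype σ] {I : Ideal (MvPolynomial σ k)}
    (hhom : ∀ f ∈ I, ∀ i : ℕ, homogeneousComponent i f ∈ I) {q : ℕ} (hq : 0 < q)
    (hI : ¬ idealOfVars σ k ^ (q - 1) ≤ I) :
    ∃ g ∈ (Ideal.span (Set.range fun i => X i ^ q)).colon (I : Set (MvPolynomial σ k)),
      g ∉ Ideal.span (Set.range fun i => X i ^ q) ⊔
        idealOfVars σ k ^ ((Fintype.card σ - 1) * (q - 1) + 1) := by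
  set B := (finite_of_degree_eq (σ := σ) (q - 1)).toFinset
  obtain ⟨c, hc0, hc⟩ :=
    Submodule.exists_ne_zero_dotProduct_eq_zero (map_coeffsOn_degree_ne_top hhom hI)
  have hcI : ∀ f ∈ I, c ⬝ᵥ coeffsOn B f = 0 := fun f hf => hc _ ⟨f, hf, rfl⟩
  obtain ⟨b₀, hb₀⟩ : ∃ b, c b ≠ 0 := Function.ne_iff.mp hc0
  have hBdeg : ∀ b ∈ B, b.degree = q - 1 := fun _ hb =>
    (Set.Finite.mem_toFinset (finite_of_degree_eq _)).mp hb
  set t : σ →₀ ℕ := equivFunOnFinite.symm fun _ => q - 1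
  have hB : ∀ b ∈ B, b ≤ t := fun b hb i => by
    simpa [t, hBdeg b hb] using le_degree i b
  refine ⟨socleDual t B c, Submodule.mem_colon.mpr fun f hf => ?_, fun hmem => hb₀ ?_⟩
  · rw [smul_eq_mul, mem_span_X_pow_iff]
    refine fun a ha => coeff_socleDual_mul_eq_zero c hB hcI hf fun i => ?_
    simpa [t] using Nat.le_sub_one_of_lt (ha i)
  obtain ⟨u, hu, v, hv, huv⟩ := Submodule.mem_sup.mp hmem
  have hu0 : coeff (t - b₀.1) u = 0 := mem_span_X_pow_iff.mp hu _ fun i => by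
    simp only [tsub_apply, t, coe_equivFunOnFinite_symm]
    omega
  have hdeg : (t - b₀.1).degree + (q - 1) = Fintype.card σ * (q - 1) := by
    have hsplit := congrArg degree (tsub_add_cancel_of_le (hB _ b₀.2))
    rw [map_add, hBdeg _ b₀.2, degree_eq_sum t] at hsplit
    simpa [t] using hsplit
  have hv0 : coeff (t - b₀.1) v = 0 := (mem_pow_idealOfVars_iff' _ _).mp hv _ (by
    rw [Nat.sub_one_mul]
    omega)
  rw [← coeff_socleDual c hB b₀, ← huv, coeff_add, hu0, hv0, add_zero]

end InverseSystem

theorem Mq_le_of_notMem_sup {k : Type} [Field k] {n : ℕ} {I : Ideal (MvPolynomial (Fin (n + 1)) k)}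
    {q D : ℕ} {g : MvPolynomial (Fin (n + 1)) k}
    (hg : g ∈ (brk (maxIdeal k n) q).colon (I : Set (MvPolynomial (Fin (n + 1)) k)))
    (hgD : g ∉ brk (maxIdeal k n) q ⊔ maxIdeal k n ^ (D + 1)) : Mq k n I q ≤ D :=
  csSup_le' fun _ hℓ => not_lt.mp fun hDℓ => hgD <|
    (sup_le_sup_left (Ideal.pow_le_pow_right hDℓ) _ : _ ≤ brk (maxIdeal k n) q ⊔ _) (hℓ hg)

theorem Mq_le {k : Type} [Field k] (p : ℕ) [Fact p.Prime] [CharP k p] {n : ℕ}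
    {I : Ideal (MvPolynomial (Fin (n + 1)) k)}
    (hhom : ∀ g ∈ I, ∀ i : ℕ, homogeneousComponent i g ∈ I) {e : ℕ}
    (hI : ¬ maxIdeal k n ^ (p ^ e - 1) ≤ I) : Mq k n I (p ^ e) ≤ n * (p ^ e - 1) := by
  have hbrk : brk (maxIdeal k n) (p ^ e) = Ideal.span (Set.range fun i => X i ^ p ^ e) :=
    brk_idealOfVars_s4 p e
  obtain ⟨g, hg, hgD⟩ := exists_mem_colon_span_X_pow_notMem_sup hhom
    (pow_pos (Fact.out : p.Prime).pos e) hI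
  rw [Fintype.card_fin, Nat.add_sub_cancel] at hgD
  exact Mq_le_of_notMem_sup (hbrk ▸ hg) (hbrk ▸ hgD)

theorem stmt4_general (k : Type) [Field k] (p : ℕ) [Fact p.Prime] [CharP k p] (n : ℕ)
    (I : Ideal (MvPolynomial (Fin (n + 1)) k))
    (hhom : ∀ g ∈ I, ∀ i : ℕ, MvPolynomial.homogeneousComponent i g ∈ I)
    (h : ∀ ℓ : ℕ, 0 < ℓ → ¬ (maxIdeal k n) ^ ℓ ≤ I) :
    ∀ N : ℤ, ∃ e : ℕ,
      ((n : ℤ) + 1) * (p : ℤ) ^ e - (Mq k n I (p ^ e) : ℤ) > N := by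
  intro N
  set e := N.toNat + 1
  have he : e < p ^ e := Nat.lt_pow_self (Fact.out : p.Prime).one_lt
  have hM := Mq_le p hhom (h (p ^ e - 1) (by omega))
  refine ⟨e, ?_⟩
  have hMZ : (Mq k n I (p ^ e) : ℤ) ≤ n * ((p : ℤ) ^ e - 1) := by
    have := (Nat.cast_le (α := ℤ)).mpr hM
    push_cast [Nat.cast_sub (by omega : 1 ≤ p ^ e)] at this
    exact this
  have heZ : (e : ℤ) < (p : ℤ) ^ e := by exact_mod_cast he
  have hNe : N < e := by omega
  linarith

theorem stmt4 (k : Type) [Field k] (p : ℕ) [Fact p.Prime] [CharP k p] (n : ℕ)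
    (I : Ideal (MvPolynomial (Fin (n + 1)) k)) (hI : I ≠ ⊤) (hI0 : I ≠ ⊥)
    (hhom : ∀ g ∈ I, ∀ i : ℕ, MvPolynomial.homogeneousComponent i g ∈ I)
    (h : ∀ ℓ : ℕ, 0 < ℓ → ¬ (maxIdeal k n) ^ ℓ ≤ I) :
    ∀ N : ℤ, ∃ e : ℕ,
      ((n : ℤ) + 1) * (p : ℤ) ^ e - (Mq k n I (p ^ e) : ℤ) > N :=
  stmt4_general k p n I hhom h
end
end

section
/- Assume [k : k^p] < ∞. For any ideals a and b of S one has (a ∩ b)^{[p]} = a^{[p]} ∩ b^{[p]}. Consequently, for any ideal J of S and any h ∈ S, there exists a smallest ideal τ of S (with respect to inclusion) satisfying J ⊆ τ and h ∈ τ^{[p]}. -/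
/-!
STATEMENT 6: Assume `[k : k^p] < ∞`. For any ideals `a` and `b` of `S = k[x_0, …, x_n]`
one has `(a ∩ b)^{[p]} = a^{[p]} ∩ b^{[p]}`. Consequently, for any ideal `J` of `S` and
any `h ∈ S`, there exists a smallest ideal `τ` of `S` (with respect to inclusion)
satisfying `J ⊆ τ` and `h ∈ τ^{[p]}`.
-/

noncomputable section

open MvPolynomial

/-!
If `R` has a finite basis `(e_i)` over its subring `R^p`, write `f = ∑ c_i(f)^p e_i`; the
`c_i` are additive and satisfy `c_i(g^p f) = g c_i(f)`. Hence `f ∈ I^{[p]}` exactly when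
every `c_i(f)` lies in `I`. Then `(a ∩ b)^{[p]} = a^{[p]} ∩ b^{[p]}` is checked
coordinatewise, and the smallest `τ` is `J + (c_i(h))_i`. For `S = k[x_0, …, x_n]` the
monomials `x^α e_j` with `0 ≤ α_i < p` form such a basis, where `(e_j)` is a basis of `k`
over `k^p`.
-/

/-- A finite basis `vec` of `R` over `R^p`; `coord i f` is the `p`-th root of the `i`-th
coordinate of `f`. -/
structure FrobeniusBasis (R : Type) [CommRing R] (p : ℕ) (ι : Type) [Fintype ι] where
  vec : ι → R
  coord : ι → R →+ R
  coord_pow_mul (i : ι) (g f : R) : coord i (g ^ p * f) = g * coord i f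
  sum_coord_pow_mul (f : R) : ∑ i, coord i f ^ p * vec i = f

namespace FrobeniusBasis

variable {R : Type} [CommRing R] {p : ℕ} {ι : Type} [Fintype ι]

theorem mem_brk_iff (b : FrobeniusBasis R p ι) (I : Ideal R) (f : R) :
    f ∈ brk I p ↔ ∀ i, b.coord i f ∈ I := by
  refine ⟨fun hf => ?_, fun hf => ?_⟩
  · -- generalized to the multiples `s * f` so that the induction over the span goes through
    have key : ∀ s i, b.coord i (s * f) ∈ I := by
      induction hf using Submodule.span_induction with
      | mem _ hx =>
        obtain ⟨g, hg, rfl⟩ := hx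
        intro s i
        rw [mul_comm, b.coord_pow_mul]
        exact I.mul_mem_right _ hg
      | zero => simp
      | add x y _ _ hx hy =>
        intro s i
        rw [mul_add, map_add]
        exact I.add_mem (hx s i) (hy s i)
      | smul t x _ hx =>
        intro s i
        rw [smul_eq_mul, ← mul_assoc]
        exact hx _ i
    simpa using key 1
  · rw [← b.sum_coord_pow_mul f]
    exact Ideal.sum_mem _ fun i _ => Ideal.mul_mem_right _ _ (Ideal.subset_span ⟨_, hf i, rfl⟩)

theorem brk_inf (b : FrobeniusBasis R p ι) (I J : Ideal R) :
    brk (I ⊓ J) p = brk I p ⊓ brk J p := by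
  ext f
  simp only [Submodule.mem_inf, b.mem_brk_iff, forall_and]

theorem isLeast_brk (b : FrobeniusBasis R p ι) (J : Ideal R) (h : R) :
    IsLeast {τ | J ≤ τ ∧ h ∈ brk τ p} (J ⊔ Ideal.span (Set.range (b.coord · h))) := by
  refine ⟨⟨le_sup_left, (b.mem_brk_iff _ h).2 fun i => ?_⟩, fun τ ⟨hJ, hh⟩ => ?_⟩
  · exact Ideal.mem_sup_right (Ideal.subset_span ⟨i, rfl⟩)
  · exact sup_le hJ (Ideal.span_le.2 (Set.range_subset_iff.2 ((b.mem_brk_iff τ h).1 hh)))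

end FrobeniusBasis

theorem exists_frobeniusBasis (k : Type) [Field k] (p : ℕ) [Fact p.Prime] [CharP k p]
    (hfin : (frobenius k p).Finite) : ∃ N, Nonempty (FrobeniusBasis k p (Fin N)) := by
  let e := (frobenius k p).rangeRestrictFieldEquiv
  have : Module.Finite (frobenius k p).fieldRange k :=
    RingHom.finite_algebraMap.1 (RingHom.Finite.of_comp_finite (f := e.toRingHom) hfin)
  let v := Module.finBasis (frobenius k p).fieldRange k
  let coord j : k →+ k :=
    e.symm.toAddMonoidHom.comp ((Finsupp.lapply j).comp v.repr.toLinearMap).toAddMonoidHom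
  refine ⟨_, ⟨⟨v, coord, ?_, ?_⟩⟩⟩
  · intro j g f
    have : g ^ p * f = e g • f := by rw [← frobenius_def]; rfl
    simp [coord, this]
  · intro f
    conv_rhs => rw [← v.sum_repr f]
    refine Finset.sum_congr rfl fun j _ => ?_
    change e.symm (v.repr f j) ^ p * v j = (v.repr f j : k) * v j
    rw [← frobenius_def, RingHom.rangeRestrictFieldEquiv_apply_symm_apply]

namespace MvPolynomial

variable {k : Type} [CommRing k] {σ : Type} [Fintype σ] {p : ℕ}

/-- Keeps the terms `c x^d` of a polynomial with `d ≡ α (mod p)` and sends each of them to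
`w c x^⌊d/p⌋`. -/
def frobeniusCoord (p : ℕ) (w : k →+ k) (α : σ → Fin p) :
    MvPolynomial σ k →+ MvPolynomial σ k :=
  (Finsupp.liftAddHom fun d => if ∀ i, d i % p = α i then
    (monomial (d.mapRange (· / p) (Nat.zero_div p))).toAddMonoidHom.comp w else 0).comp
    AddMonoidAlgebra.coeffAddEquiv.toAddMonoidHom

theorem frobeniusCoord_monomial (w : k →+ k) (α : σ → Fin p) (d : σ →₀ ℕ) (a : k) :
    frobeniusCoord p w α (monomial d a) =
      if ∀ i, d i % p = α i then monomial (d.mapRange (· / p) (Nat.zero_div p)) (w a)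
      else 0 := by
  rw [← single_eq_monomial]
  change Finsupp.liftAddHom _ (Finsupp.single d a) = _
  rw [Finsupp.liftAddHom_apply_single]
  split_ifs <;> rfl

variable [Fact p.Prime] [CharP k p]

theorem frobeniusCoord_pow_mul (w : k →+ k) (hw : ∀ a x : k, w (a ^ p * x) = a * w x)
    (α : σ → Fin p) (g f : MvPolynomial σ k) :
    frobeniusCoord p w α (g ^ p * f) = g * frobeniusCoord p w α f := by
  induction f using MvPolynomial.induction_on' with
  | add f₁ f₂ h₁ h₂ => rw [mul_add, map_add, map_add, mul_add, h₁, h₂]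
  | monomial d a =>
    induction g using MvPolynomial.induction_on' with
    | add g₁ g₂ h₁ h₂ => rw [add_pow_char, add_mul, map_add, h₁, h₂, add_mul]
    | monomial e b =>
      have hp := (Fact.out : p.Prime).pos
      have hmod (i : σ) : (p • e + d) i % p = d i % p := by simp
      have hdiv : (p • e + d).mapRange (· / p) (Nat.zero_div p) =
          e + d.mapRange (· / p) (Nat.zero_div p) := by
        ext i
        simp [Nat.add_comm (p * e i), Nat.add_mul_div_left _ _ hp, Nat.add_comm]
      simp only [monomial_pow, monomial_mul, frobeniusCoord_monomial, hmod, mul_ite, mul_zero,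
        hdiv, hw]

theorem sum_frobeniusCoord_pow_mul {ι : Type} [Fintype ι] [DecidableEq σ] (v : ι → k)
    (w : ι → k →+ k) (hw : ∀ x : k, ∑ j, w j x ^ p * v j = x) (f : MvPolynomial σ k) :
    ∑ j, ∑ α : σ → Fin p, frobeniusCoord p (w j) α f ^ p *
      monomial (Finsupp.equivFunOnFinite.symm fun i => (α i : ℕ)) (v j) = f := by
  induction f using MvPolynomial.induction_on' with
  | add f₁ f₂ h₁ h₂ =>
    simp only [map_add, add_pow_char, add_mul, Finset.sum_add_distrib, h₁, h₂]
  | monomial d a =>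
    have hp := (Fact.out : p.Prime).pos
    let α₀ : σ → Fin p := fun i => ⟨d i % p, Nat.mod_lt _ hp⟩
    have hd : p • d.mapRange (· / p) (Nat.zero_div p) +
        Finsupp.equivFunOnFinite.symm (fun i => (α₀ i : ℕ)) = d := by
      ext i
      exact Nat.div_add_mod (d i) p
    have hterm (j) : ∑ α : σ → Fin p, frobeniusCoord p (w j) α (monomial d a) ^ p *
        monomial (Finsupp.equivFunOnFinite.symm fun i => (α i : ℕ)) (v j) =
          monomial d (w j a ^ p * v j) := by
      rw [Finset.sum_eq_single_of_mem α₀ (Finset.mem_univ _)]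
      · rw [frobeniusCoord_monomial, if_pos fun i => rfl, monomial_pow, monomial_mul, hd]
      · intro α _ hne
        rw [frobeniusCoord_monomial, if_neg, zero_pow hp.ne', zero_mul]
        exact fun h => hne (_root_.funext fun i => Fin.ext (h i).symm)
    simp only [hterm, ← map_sum, hw]

end MvPolynomial

def FrobeniusBasis.mvPolynomial {k : Type} [CommRing k] {p : ℕ} [Fact p.Prime] [CharP k p]
    {ι : Type} [Fintype ι] (σ : Type) [Fintype σ] [DecidableEq σ] (b : FrobeniusBasis k p ι) :
    FrobeniusBasis (MvPolynomial σ k) p (ι × (σ → Fin p)) where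
  vec jα := monomial (Finsupp.equivFunOnFinite.symm fun i => (jα.2 i : ℕ)) (b.vec jα.1)
  coord jα := frobeniusCoord p (b.coord jα.1) jα.2
  coord_pow_mul jα := frobeniusCoord_pow_mul _ (b.coord_pow_mul jα.1) jα.2
  sum_coord_pow_mul f := by
    rw [Fintype.sum_prod_type]
    exact sum_frobeniusCoord_pow_mul b.vec b.coord b.sum_coord_pow_mul f

theorem stmt6 (k : Type) [Field k] (p : ℕ) [Fact p.Prime] [CharP k p]
    (hfin : (frobenius k p).Finite) (n : ℕ) :
    (∀ a b : Ideal (MvPolynomial (Fin (n + 1)) k),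
        brk (a ⊓ b) p = brk a p ⊓ brk b p) ∧
      (∀ (J : Ideal (MvPolynomial (Fin (n + 1)) k)) (h : MvPolynomial (Fin (n + 1)) k),
        ∃ τ : Ideal (MvPolynomial (Fin (n + 1)) k),
          (J ≤ τ ∧ h ∈ brk τ p) ∧
            ∀ a : Ideal (MvPolynomial (Fin (n + 1)) k),
              J ≤ a → h ∈ brk a p → τ ≤ a) := by
  obtain ⟨N, ⟨b⟩⟩ := exists_frobeniusBasis k p hfin
  let B := b.mvPolynomial (Fin (n + 1))
  refine ⟨B.brk_inf, fun J h => ?_⟩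
  obtain ⟨hτ, hleast⟩ := B.isLeast_brk J h
  exact ⟨_, hτ, fun a hJ hh => hleast ⟨hJ, hh⟩⟩
end
end

section
/- Assume [k : k^p] < ∞. Let q = p^e and let g ∈ S satisfy Jg ⊆ m^{[q]}. Then f^{p−1}g^p ∈ m^{[pq]} if and only if g ∈ (m^{[q]} : τ). -/
/-!
STATEMENT 7: Assume `[k : k^p] < ∞`. Let `f_1, …, f_c` be a homogeneous regular
sequence in `S = k[x_0, …, x_n]`, `J = (f_1, …, f_c)`, `f = f_1⋯f_c`, and let `τ` be the
smallest ideal with `J ⊆ τ` and `f^{p−1} ∈ τ^{[p]}`. Let `q = p^e` and let `g ∈ S`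
satisfy `Jg ⊆ m^{[q]}`. Then `f^{p−1}g^p ∈ m^{[pq]}` if and only if `g ∈ (m^{[q]} : τ)`.
-/

noncomputable section

open MvPolynomial

section Aux

lemma exists_pbasis (k : Type) [Field k] (p : ℕ) [Fact p.Prime] [CharP k p]
    (hfin : (frobenius k p).Finite) :
    ∃ (N : ℕ) (b : Fin N → k) (μ : Fin N → k → k),
      (∀ x : k, x = ∑ j, (μ j x) ^ p * b j) ∧
      (∀ cf : Fin N → k, ∑ j, (cf j) ^ p * b j = 0 → ∀ j, cf j = 0) := by
  classical
  set F := (frobenius k p).fieldRange with hF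
  haveI hMF : Module.Finite F k := by
    have H : @Module.Finite k k _ _ (@Algebra.toModule k k _ _ ((frobenius k p).toAlgebra)) :=
      hfin
    obtain ⟨s, hs⟩ := @Module.Finite.fg_top k k _ _ _ H
    refine ⟨⟨s, ?_⟩⟩
    rw [eq_top_iff]
    intro x _
    have hx : x ∈ @Submodule.span k k _ _ (@Algebra.toModule k k _ _ ((frobenius k p).toAlgebra))
        (s : Set k) := by rw [hs]; trivial
    refine @Submodule.span_induction k k _ _
      (@Algebra.toModule k k _ _ ((frobenius k p).toAlgebra)) (s : Set k)
      (fun y _ => y ∈ Submodule.span F (s : Set k)) ?_ ?_ ?_ ?_ x hx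
    · intro y hy; exact Submodule.subset_span hy
    · exact Submodule.zero_mem _
    · intro y z _ _ hy hz; exact Submodule.add_mem _ hy hz
    · intro c y _ hy
      show (⟨frobenius k p c, ⟨c, rfl⟩⟩ : F) • y ∈ Submodule.span F (s : Set k)
      exact Submodule.smul_mem _ _ hy
  let B := Module.finBasis F k
  refine ⟨Module.finrank F k, fun j => B j, fun j x => ((B.repr x j).2.choose), ?_, ?_⟩
  · intro x
    conv_lhs => rw [← B.sum_repr x]
    refine Finset.sum_congr rfl fun j _ => ?_
    have h2 := (B.repr x j).2.choose_spec
    rw [Subfield.smul_def, smul_eq_mul, ← h2, frobenius_def]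
  · intro cf hcf j
    have hind := Fintype.linearIndependent_iff.mp B.linearIndependent
      (fun j => (⟨(cf j) ^ p, ⟨cf j, rfl⟩⟩ : F))
    have h0 : ∑ j, (⟨(cf j) ^ p, ⟨cf j, rfl⟩⟩ : F) • B j = 0 := by
      rw [← hcf]
      refine Finset.sum_congr rfl fun j _ => ?_
      rw [Subfield.smul_def, smul_eq_mul]
    have := hind h0 j
    have : (cf j) ^ p = 0 := congrArg Subtype.val this
    exact pow_eq_zero_iff (Nat.Prime.ne_zero Fact.out) |>.mp this

variable {p : ℕ} [Fact p.Prime]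

lemma brk_span_s7 {R : Type} [CommRing R] [CharP R p] (G : Set R) (m : ℕ) :
    brk (Ideal.span G) (p ^ m) = Ideal.span ((fun a => a ^ p ^ m) '' G) := by
  apply le_antisymm
  · rw [brk, Ideal.span_le]
    rintro _ ⟨u, hu, rfl⟩
    refine Submodule.span_induction
      (p := fun y _ => y ^ p ^ m ∈ Ideal.span ((fun a => a ^ p ^ m) '' G))
      ?_ ?_ ?_ ?_ hu
    · intro y hy; exact Ideal.subset_span ⟨y, hy, rfl⟩
    · simp only [zero_pow (pow_ne_zero m (Nat.Prime.ne_zero Fact.out))]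
      exact Submodule.zero_mem _
    · intro x y _ _ hx hy
      rw [add_pow_char_pow]
      exact Submodule.add_mem _ hx hy
    · intro r x _ hx
      rw [smul_eq_mul, mul_pow]
      exact Ideal.mul_mem_left _ _ hx
  · refine Ideal.span_mono ?_
    exact Set.image_mono Ideal.subset_span

variable {k : Type} [Field k] [CharP k p] {n : ℕ}

local notation "R" => MvPolynomial (Fin (n + 1)) k

lemma mem_brk_max (u : R) (m : ℕ) :
    u ∈ brk (maxIdeal k n) (p ^ m) ↔ ∀ s ∈ u.support, ∃ i, p ^ m ≤ s i := by
  rw [maxIdeal, brk_span_s7]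
  have himg : (fun a => a ^ p ^ m) '' Set.range (X : Fin (n+1) → R)
      = (fun s => monomial s (1 : k)) ''
          Set.range (fun i : Fin (n+1) => Finsupp.single i (p ^ m)) := by
    rw [← Set.range_comp, ← Set.range_comp]
    refine congrArg _ (funext fun i => ?_)
    exact X_pow_eq_monomial
  rw [himg, mem_ideal_span_monomial_image]
  constructor
  · intro h s hs
    obtain ⟨si, ⟨i, rfl⟩, hle⟩ := h s hs
    exact ⟨i, by simpa using (Finsupp.single_le_iff).mp hle⟩
  · intro h s hs
    obtain ⟨i, hi⟩ := h s hs
    exact ⟨Finsupp.single i (p ^ m), ⟨i, rfl⟩, Finsupp.single_le_iff.mpr hi⟩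

lemma pow_mem_brk_succ {v : R} {e : ℕ} (hv : v ∈ brk (maxIdeal k n) (p ^ e)) :
    v ^ p ∈ brk (maxIdeal k n) (p ^ (e + 1)) := by
  rw [maxIdeal, brk_span_s7] at hv
  refine Submodule.span_induction
    (p := fun y _ => y ^ p ∈ brk (maxIdeal k n) (p ^ (e + 1))) ?_ ?_ ?_ ?_ hv
  · rintro _ ⟨x, ⟨i, rfl⟩, rfl⟩
    have : (X i ^ p ^ e : R) ^ p = (fun a => a ^ p ^ (e + 1)) (X i) := by
      simp only [← pow_mul, pow_succ]
    rw [this, maxIdeal, brk_span_s7]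
    exact Ideal.subset_span ⟨X i, ⟨i, rfl⟩, rfl⟩
  · simp only [zero_pow (Nat.Prime.ne_zero Fact.out)]
    exact Submodule.zero_mem _
  · intro x y _ _ hx hy
    rw [add_pow_char]
    exact Submodule.add_mem _ hx hy
  · intro r x _ hx
    rw [smul_eq_mul, mul_pow]
    exact Ideal.mul_mem_left _ _ hx

lemma pow_p_eq_sum (v : R) :
    v ^ p = ∑ t ∈ v.support, monomial (p • t) ((coeff t v) ^ p) := by
  conv_lhs => rw [v.as_sum]
  rw [sum_pow_char]
  exact Finset.sum_congr rfl fun t _ => by rw [monomial_pow]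

lemma coeff_pow_p (v : R) (t : Fin (n + 1) →₀ ℕ) :
    coeff (p • t) (v ^ p) = (coeff t v) ^ p := by
  have hp0 : p ≠ 0 := Nat.Prime.ne_zero Fact.out
  rw [pow_p_eq_sum, coeff_sum]
  have : ∀ t' ∈ v.support, (fun t' => coeff (p • t) (monomial (p • t') ((coeff t' v) ^ p))) t'
      = if t' = t then (coeff t' v) ^ p else 0 := by
    intro t' _
    beta_reduce
    rw [coeff_monomial]
    refine if_congr ?_ rfl rfl
    constructor
    · intro h
      ext i
      have := congrArg (fun s => s i) h
      simp only [Finsupp.smul_apply, smul_eq_mul] at this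
      exact Nat.eq_of_mul_eq_mul_left (Nat.pos_of_ne_zero hp0) this
    · intro h; rw [h]
  rw [Finset.sum_congr rfl this, Finset.sum_ite_eq' v.support t (fun t' => (coeff t' v) ^ p)]
  by_cases ht : t ∈ v.support
  · rw [if_pos ht]
  · rw [if_neg ht, notMem_support_iff.mp ht, zero_pow hp0]

lemma coeff_pow_p_zero (v : R) (s : Fin (n + 1) →₀ ℕ) (i : Fin (n + 1)) (hi : ¬ p ∣ s i) :
    coeff s (v ^ p) = 0 := by
  rw [pow_p_eq_sum, coeff_sum]
  refine Finset.sum_eq_zero fun t _ => ?_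
  rw [coeff_monomial, if_neg]
  intro h
  apply hi
  rw [← h]
  simp [Finsupp.smul_apply]

end Aux

/-- exponent function: residues as a finitely supported function -/
def tf (p : ℕ) {n : ℕ} (a : Fin (n + 1) → Fin p) : Fin (n + 1) →₀ ℕ :=
  Finsupp.equivFunOnFinite.symm (fun i => (a i : ℕ))

lemma tf_apply {p n : ℕ} (a : Fin (n + 1) → Fin p) (i : Fin (n + 1)) : tf p a i = a i := rfl

section Main

variable {k : Type} [Field k] {p : ℕ} [Fact p.Prime] [CharP k p] {n : ℕ}

local notation "R" => MvPolynomial (Fin (n + 1)) k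

lemma decomp {N : ℕ} (b : Fin N → k) (μ : Fin N → k → k)
    (hb : ∀ x : k, x = ∑ j, (μ j x) ^ p * b j) (u : R) :
    ∃ w : Fin N → (Fin (n + 1) → Fin p) → R,
      u = ∑ j, ∑ a, C (b j) * monomial (tf p a) 1 * (w j a) ^ p := by
  classical
  have hp0 : p ≠ 0 := Nat.Prime.ne_zero Fact.out
  have hppos : 0 < p := Nat.pos_of_ne_zero hp0
  have P0 : ∃ w : Fin N → (Fin (n + 1) → Fin p) → R,
      (0 : R) = ∑ j, ∑ a, C (b j) * monomial (tf p a) 1 * (w j a) ^ p := by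
    refine ⟨fun _ _ => 0, ?_⟩
    simp [zero_pow hp0]
  have Padd : ∀ x y : R,
      (∃ w : Fin N → (Fin (n + 1) → Fin p) → R,
        x = ∑ j, ∑ a, C (b j) * monomial (tf p a) 1 * (w j a) ^ p) →
      (∃ w : Fin N → (Fin (n + 1) → Fin p) → R,
        y = ∑ j, ∑ a, C (b j) * monomial (tf p a) 1 * (w j a) ^ p) →
      ∃ w : Fin N → (Fin (n + 1) → Fin p) → R,
        x + y = ∑ j, ∑ a, C (b j) * monomial (tf p a) 1 * (w j a) ^ p := by
    rintro x y ⟨w1, rfl⟩ ⟨w2, rfl⟩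
    refine ⟨fun j a => w1 j a + w2 j a, ?_⟩
    rw [← Finset.sum_add_distrib]
    refine Finset.sum_congr rfl fun j _ => ?_
    rw [← Finset.sum_add_distrib]
    refine Finset.sum_congr rfl fun a _ => ?_
    rw [add_pow_char, mul_add]
  have Pmono : ∀ (s : Fin (n + 1) →₀ ℕ) (c : k),
      ∃ w : Fin N → (Fin (n + 1) → Fin p) → R,
        (monomial s c : R) = ∑ j, ∑ a, C (b j) * monomial (tf p a) 1 * (w j a) ^ p := by
    intro s c
    set ares : Fin (n + 1) → Fin p := fun i => ⟨s i % p, Nat.mod_lt _ hppos⟩ with hares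
    set sdiv : Fin (n + 1) →₀ ℕ := Finsupp.mapRange (· / p) (Nat.zero_div p) s with hsdiv
    refine ⟨fun j a => if a = ares then monomial sdiv (μ j c) else 0, ?_⟩
    have hcollapse : ∀ j : Fin N,
        (∑ a, C (b j) * monomial (tf p a) 1 *
          (if a = ares then monomial sdiv (μ j c) else 0) ^ p)
        = C (b j) * monomial (tf p ares) 1 * (monomial sdiv (μ j c)) ^ p := by
      intro j
      rw [Finset.sum_eq_single ares]
      · rw [if_pos rfl]
      · intro a _ ha
        rw [if_neg ha, zero_pow hp0, mul_zero]
      · intro h; exact absurd (Finset.mem_univ _) h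
    rw [Finset.sum_congr rfl fun j _ => hcollapse j]
    have hsplit : tf p ares + p • sdiv = s := by
      ext i
      simp only [Finsupp.add_apply, Finsupp.smul_apply, smul_eq_mul, tf_apply,
        Finsupp.mapRange_apply, hsdiv, hares]
      exact Nat.mod_add_div (s i) p
    have : ∀ j : Fin N, C (b j) * monomial (tf p ares) 1 * (monomial sdiv (μ j c)) ^ p
        = monomial s (b j * ((μ j c) ^ p)) := by
      intro j
      rw [monomial_pow, C_mul_monomial, monomial_mul, mul_one, hsplit]
    rw [Finset.sum_congr rfl fun j _ => this j, ← map_sum]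
    congr 1
    conv_lhs => rw [hb c]
    exact Finset.sum_congr rfl fun j _ => mul_comm _ _
  have hmain : ∃ w : Fin N → (Fin (n + 1) → Fin p) → R,
      (∑ s ∈ u.support, monomial s (coeff s u))
        = ∑ j, ∑ a, C (b j) * monomial (tf p a) 1 * (w j a) ^ p :=
    Finset.sum_induction _
      (fun x => ∃ w : Fin N → (Fin (n + 1) → Fin p) → R,
        x = ∑ j, ∑ a, C (b j) * monomial (tf p a) 1 * (w j a) ^ p)
      Padd P0 (fun s _ => Pmono s (coeff s u))
  rw [← u.as_sum] at hmain
  exact hmain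

end Main

section Indep

variable {k : Type} [Field k] {p : ℕ} [Fact p.Prime] [CharP k p] {n : ℕ}

local notation "R" => MvPolynomial (Fin (n + 1)) k

lemma indep {N : ℕ} (b : Fin N → k)
    (hind : ∀ cf : Fin N → k, ∑ j, (cf j) ^ p * b j = 0 → ∀ j, cf j = 0)
    (e : ℕ) (w : Fin N → (Fin (n + 1) → Fin p) → R)
    (H : (∑ j, ∑ a, C (b j) * monomial (tf p a) 1 * (w j a) ^ p)
      ∈ brk (maxIdeal k n) (p ^ (e + 1))) :
    ∀ j a, w j a ∈ brk (maxIdeal k n) (p ^ e) := by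
  classical
  have hp0 : p ≠ 0 := Nat.Prime.ne_zero Fact.out
  intro j0 a0
  rw [mem_brk_max]
  intro t0 ht0
  by_contra hcon
  push_neg at hcon
  set s0 : Fin (n+1) →₀ ℕ := tf p a0 + p • t0 with hs0
  have hs0i : ∀ i, s0 i = (a0 i : ℕ) + p * t0 i := by
    intro i
    simp [hs0, Finsupp.add_apply, Finsupp.smul_apply, tf_apply, smul_eq_mul]
  have hterm : ∀ (j : Fin N) (a : Fin (n+1) → Fin p),
      coeff s0 (C (b j) * monomial (tf p a) 1 * (w j a) ^ p)
        = if a = a0 then b j * (coeff t0 (w j a0)) ^ p else 0 := by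
    intro j a
    have hCm : C (b j) * monomial (tf p a) 1 = monomial (tf p a) (b j) := by
      rw [C_mul_monomial, mul_one]
    rw [hCm, coeff_monomial_mul']
    by_cases ha : a = a0
    · subst ha
      rw [if_pos (self_le_add_right _ _), if_pos rfl, add_tsub_cancel_left, coeff_pow_p]
    · rw [if_neg ha]
      by_cases hle : tf p a ≤ s0
      · rw [if_pos hle]
        have hne : ∃ i, (a i : ℕ) ≠ (a0 i : ℕ) := by
          by_contra h
          push_neg at h
          exact ha (funext fun i => Fin.ext (h i))
        obtain ⟨i, hi⟩ := hne
        have hlei : (a i : ℕ) ≤ s0 i := by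
          have := (Finsupp.le_def.mp hle) i
          rwa [tf_apply] at this
        have hnd : ¬ p ∣ (s0 - tf p a) i := by
          rw [Finsupp.tsub_apply, tf_apply]
          rintro ⟨cq, hcq⟩
          have heq : s0 i = (a i : ℕ) + p * cq := by omega
          have h1 : s0 i % p = (a0 i : ℕ) := by
            rw [hs0i i, Nat.add_mul_mod_self_left, Nat.mod_eq_of_lt (a0 i).isLt]
          have h2 : s0 i % p = (a i : ℕ) := by
            rw [heq, Nat.add_mul_mod_self_left, Nat.mod_eq_of_lt (a i).isLt]
          exact hi (h2.symm.trans h1)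
        rw [coeff_pow_p_zero _ _ i hnd, mul_zero]
      · rw [if_neg hle]
  have hcoeff : coeff s0 (∑ j, ∑ a, C (b j) * monomial (tf p a) 1 * (w j a) ^ p)
      = ∑ j, b j * (coeff t0 (w j a0)) ^ p := by
    rw [coeff_sum]
    refine Finset.sum_congr rfl fun j _ => ?_
    rw [coeff_sum, Finset.sum_congr rfl (fun a _ => hterm j a),
      Finset.sum_ite_eq' Finset.univ a0 (fun _ => b j * (coeff t0 (w j a0)) ^ p),
      if_pos (Finset.mem_univ _)]
  have hzero : coeff s0 (∑ j, ∑ a, C (b j) * monomial (tf p a) 1 * (w j a) ^ p) = 0 := by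
    by_cases hs : s0 ∈ (∑ j, ∑ a, C (b j) * monomial (tf p a) 1 * (w j a) ^ p).support
    · exfalso
      obtain ⟨i, hij⟩ := (mem_brk_max _ _).mp H s0 hs
      have h1 : s0 i < p * (t0 i + 1) := by
        rw [hs0i i, Nat.mul_succ]
        have := (a0 i).isLt
        omega
      have h2 : p * (t0 i + 1) ≤ p * p ^ e := Nat.mul_le_mul_left p (hcon i)
      rw [pow_succ'] at hij
      omega
    · exact notMem_support_iff.mp hs
  have h0 : ∑ j, (coeff t0 (w j a0)) ^ p * b j = 0 := by
    rw [← hzero, hcoeff]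
    exact Finset.sum_congr rfl fun j _ => mul_comm _ _
  exact mem_support_iff.mp ht0 (hind _ h0 j0)

end Indep

section Key

variable {k : Type} [Field k] {p : ℕ} [Fact p.Prime] [CharP k p] {n : ℕ}

local notation "R" => MvPolynomial (Fin (n + 1)) k

lemma key {N : ℕ} (b : Fin N → k) (μ : Fin N → k → k)
    (hb : ∀ x : k, x = ∑ j, (μ j x) ^ p * b j)
    (hind : ∀ cf : Fin N → k, ∑ j, (cf j) ^ p * b j = 0 → ∀ j, cf j = 0)
    (e : ℕ) (u g : R)
    (H : u * g ^ p ∈ brk (maxIdeal k n) (p ^ (e + 1))) :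
    u ∈ brk (Submodule.colon (brk (maxIdeal k n) (p ^ e)) (Ideal.span {g})) p := by
  obtain ⟨w, hw⟩ := decomp b μ hb u
  have hrw : u * g ^ p = ∑ j, ∑ a, C (b j) * monomial (tf p a) 1 * ((w j a) * g) ^ p := by
    rw [hw, Finset.sum_mul]
    refine Finset.sum_congr rfl fun j _ => ?_
    rw [Finset.sum_mul]
    refine Finset.sum_congr rfl fun a _ => ?_
    rw [mul_pow, mul_assoc]
  rw [hrw] at H
  have hmem := indep b hind e (fun j a => w j a * g) H
  have hcolon : ∀ j a, w j a ∈ Submodule.colon (brk (maxIdeal k n) (p ^ e)) (Ideal.span {g}) := by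
    intro j a
    rw [Submodule.mem_colon]
    intro x hx
    obtain ⟨d, rfl⟩ := Ideal.mem_span_singleton'.mp hx
    rw [smul_eq_mul, mul_left_comm]
    exact Ideal.mul_mem_left _ d (hmem j a)
  rw [hw]
  refine Submodule.sum_mem _ fun j _ => Submodule.sum_mem _ fun a _ => ?_
  exact Ideal.mul_mem_left _ _ (Ideal.subset_span ⟨w j a, hcolon j a, rfl⟩)

end Key

theorem stmt7 (k : Type) [Field k] (p : ℕ) [Fact p.Prime] [CharP k p]
    (hfin : (frobenius k p).Finite) (n c : ℕ)
    (f : Fin c → MvPolynomial (Fin (n + 1)) k) (df : Fin c → ℕ)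
    (hhom : ∀ j, (f j).IsHomogeneous (df j))
    (hreg : RingTheory.Sequence.IsRegular (MvPolynomial (Fin (n + 1)) k) (List.ofFn f))
    (J : Ideal (MvPolynomial (Fin (n + 1)) k)) (hJ : J = Ideal.span (Set.range f))
    (τ : Ideal (MvPolynomial (Fin (n + 1)) k))
    (hJτ : J ≤ τ) (hfτ : (∏ j, f j) ^ (p - 1) ∈ brk τ p)
    (hmin : ∀ a : Ideal (MvPolynomial (Fin (n + 1)) k),
      J ≤ a → (∏ j, f j) ^ (p - 1) ∈ brk a p → τ ≤ a)
    (e : ℕ) (g : MvPolynomial (Fin (n + 1)) k)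
    (hg : Ideal.span {g} * J ≤ brk (maxIdeal k n) (p ^ e)) :
    (∏ j, f j) ^ (p - 1) * g ^ p ∈ brk (maxIdeal k n) (p * p ^ e) ↔
      g ∈ Submodule.colon (brk (maxIdeal k n) (p ^ e)) τ := by
  have hq : p * p ^ e = p ^ (e + 1) := (pow_succ' p e).symm
  rw [hq]
  obtain ⟨N, b, μ, hb, hind⟩ := exists_pbasis k p hfin
  constructor
  · intro H
    set A := Submodule.colon (brk (maxIdeal k n) (p ^ e)) (Ideal.span {g}) with hA
    have hkey := key b μ hb hind e _ g H
    have hJA : J ≤ A := by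
      intro u hu
      rw [hA, Submodule.mem_colon]
      intro x hx
      rw [smul_eq_mul]
      exact mul_comm x u ▸ hg (Ideal.mul_mem_mul hx hu)
    have hτA := hmin A hJA hkey
    rw [Submodule.mem_colon]
    intro t ht
    have h2 := Submodule.mem_colon.mp (hτA ht) g (Ideal.mem_span_singleton_self g)
    rw [smul_eq_mul] at h2 ⊢
    rw [mul_comm]
    exact h2
  · intro hgτ
    refine Submodule.span_induction
      (p := fun y _ => y * g ^ p ∈ brk (maxIdeal k n) (p ^ (e + 1))) ?_ ?_ ?_ ?_ hfτ
    · rintro _ ⟨t, ht, rfl⟩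
      beta_reduce
      rw [← mul_pow]
      have h3 : t * g ∈ brk (maxIdeal k n) (p ^ e) := by
        have := Submodule.mem_colon.mp hgτ t ht
        rw [smul_eq_mul] at this
        rw [mul_comm]
        exact this
      exact pow_mem_brk_succ h3
    · beta_reduce; rw [zero_mul]; exact Submodule.zero_mem _
    · intro x y _ _ hx hy; beta_reduce at hx hy ⊢; rw [add_mul]
      exact Submodule.add_mem _ hx hy
    · intro r x _ hx; beta_reduce at hx ⊢; rw [smul_eq_mul, mul_assoc]
      exact Ideal.mul_mem_left _ _ hx
end
end

section
/- Let g_1, …, g_{n+1} be a homogeneous regular sequence in S with deg g_i = e_i ≥ 1 for each i. Then m^s ⊆ (g_1, …, g_{n+1}) where s = e_1 + ⋯ + e_{n+1} − n; equivalently, every homogeneous element of S of degree strictly greater than e_1 + ⋯ + e_{n+1} − (n+1) lies in (g_1, …, g_{n+1}). -/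
/-!
STATEMENT 10: Let `g_1, …, g_{n+1}` be a homogeneous regular sequence in
`S = k[x_0, …, x_n]` with `deg g_i = e_i ≥ 1`. Then `m^s ⊆ (g_1, …, g_{n+1})` where
`s = e_1 + ⋯ + e_{n+1} − n`; equivalently, every homogeneous element of `S` of degree
strictly greater than `e_1 + ⋯ + e_{n+1} − (n+1)` lies in `(g_1, …, g_{n+1})`.
-/

noncomputable section

open MvPolynomial

/-!
Write `H_I` for the Hilbert series of `S ⧸ I`, whose `D`-th coefficient is `dim S_D - dim I_D`.
Adjoining to a homogeneous ideal `I` a homogeneous element of degree `e` that is a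
nonzerodivisor modulo `I` multiplies `H_I` by `1 - t^e`. The variables form such a sequence
with `S ⧸ m = k`, so `(1 - t)^(n+1) H_(0) = 1`; for the sequence `g` this gives
`H_(g) = ∏ (1 - t^(e_i)) H_(0) = ∏ (1 + t + ⋯ + t^(e_i - 1))`, a polynomial of degree
`∑ e_i - (n+1)`. So `(g)` contains every homogeneous element of larger degree, and in
particular the degree-`s` generators of `m^s`.
-/

open Module RingTheory.Sequence

attribute [local instance] MvPolynomial.gradedAlgebra

section Regular

variable {R : Type*} [CommRing R]

lemma Ideal.ofList_ofFn {M : ℕ} (g : Fin M → R) :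
    Ideal.ofList (List.ofFn g) = Ideal.span (Set.range g) := by
  simp only [Ideal.ofList, List.mem_ofFn]
  rfl

lemma Ideal.span_range_fin_succ {M : ℕ} (g : Fin (M + 1) → R) :
    Ideal.span (Set.range g) =
      Ideal.span (Set.range fun i : Fin M => g i.castSucc) ⊔ Ideal.span {g (Fin.last M)} := by
  rw [← Ideal.ofList_ofFn, List.ofFn_succ', List.concat_eq_append, Ideal.ofList_append,
    Ideal.ofList_ofFn, Ideal.ofList_singleton]

lemma isSMulRegular_quotient_smul_top_iff (I : Ideal R) (r : R) :
    IsSMulRegular (R ⧸ (I • ⊤ : Submodule R R)) r ↔ ∀ x, r * x ∈ I → x ∈ I := by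
  rw [isSMulRegular_quotient_iff_mem_of_smul_mem, smul_eq_mul, Ideal.mul_top]
  rfl

lemma RingTheory.Sequence.isWeaklyRegular_ofFn_succ_iff {M : ℕ} (g : Fin (M + 1) → R) :
    IsWeaklyRegular R (List.ofFn g) ↔
      IsWeaklyRegular R (List.ofFn fun i : Fin M => g i.castSucc) ∧
        ∀ x, g (Fin.last M) * x ∈ Ideal.span (Set.range fun i : Fin M => g i.castSucc) →
          x ∈ Ideal.span (Set.range fun i : Fin M => g i.castSucc) := by
  rw [List.ofFn_succ', List.concat_eq_append, isWeaklyRegular_append_iff,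
    isWeaklyRegular_singleton_iff, Ideal.ofList_ofFn, isSMulRegular_quotient_smul_top_iff]

end Regular

namespace MvPolynomial

section CommSemiring

variable {σ R : Type*} [CommSemiring R] {f : MvPolynomial σ R} {e D : ℕ}

lemma IsHomogeneous.homogeneousComponent_mul_of_le (hf : f.IsHomogeneous e) (h : e ≤ D)
    (b : MvPolynomial σ R) :
    homogeneousComponent D (f * b) = f * homogeneousComponent (D - e) b := by
  rw [← decomposition.decompose'_apply, ← decomposition.decompose'_apply]
  exact DirectSum.coe_decompose_mul_of_left_mem_of_le (homogeneousSubmodule σ R) (b := b) hf h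

lemma IsHomogeneous.homogeneousComponent_mul_of_lt (hf : f.IsHomogeneous e) (h : D < e)
    (b : MvPolynomial σ R) : homogeneousComponent D (f * b) = 0 := by
  rw [← decomposition.decompose'_apply]
  exact DirectSum.coe_decompose_mul_of_left_mem_of_not_le (homogeneousSubmodule σ R) (b := b) hf
    (not_le.2 h)

lemma span_range_X_pow_le {I : Ideal (MvPolynomial σ R)} {s : ℕ}
    (h : homogeneousSubmodule σ R s ≤ I.restrictScalars R) :
    Ideal.span (Set.range X) ^ s ≤ I := by
  rw [Ideal.span, Submodule.span_pow, Submodule.span_le]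
  intro x hx
  apply h
  rw [← homogeneousSubmodule_one_pow]
  exact Submodule.pow_subset_pow _
    (Set.pow_subset_pow_left (Set.range_subset_iff.2 (isHomogeneous_X R)) hx)

end CommSemiring

section CommRing

variable {σ R : Type*} [CommRing R]

lemma mem_span_X_image_of_X_mul_mem {s : Set σ} {i : σ} (hi : i ∉ s) {f : MvPolynomial σ R}
    (h : X i * f ∈ Ideal.span (X '' s)) : f ∈ Ideal.span (X '' s) := by
  rw [mem_ideal_span_X_image] at h ⊢
  intro m hm
  obtain ⟨j, hjs, hj⟩ := h (Finsupp.single i 1 + m) (by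
    rw [support_X_mul]; exact Finset.mem_map_of_mem _ hm)
  have hij : i ≠ j := fun hij => hi (hij ▸ hjs)
  exact ⟨j, hjs, by simpa [Finsupp.single_apply, hij] using hj⟩

lemma isWeaklyRegular_ofFn_X {M : ℕ} {v : Fin M → σ} (hv : Function.Injective v) :
    IsWeaklyRegular (MvPolynomial σ R) (List.ofFn fun i => (X (v i) : MvPolynomial σ R)) := by
  induction M with
  | zero => simp
  | succ M ih =>
    rw [isWeaklyRegular_ofFn_succ_iff]
    refine ⟨ih (hv.comp (Fin.castSucc_injective M)), fun x => ?_⟩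
    rw [Set.range_comp' (X : σ → MvPolynomial σ R) (fun i : Fin M => v i.castSucc)]
    refine mem_span_X_image_of_X_mul_mem ?_
    rintro ⟨i, hi⟩
    exact Fin.castSucc_ne_last i (hv hi)

end CommRing

section HilbertSeries

variable {σ k : Type*} [Field k]

def degreePart (I : Ideal (MvPolynomial σ k)) (D : ℕ) : Submodule k (MvPolynomial σ k) :=
  I.restrictScalars k ⊓ homogeneousSubmodule σ k D

instance [Finite σ] (D : ℕ) : FiniteDimensional k (homogeneousSubmodule σ k D) :=
  Module.Finite.iff_fg.2 (homogeneousSubmodule_fg σ k D)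

instance [Finite σ] (I : Ideal (MvPolynomial σ k)) (D : ℕ) :
    FiniteDimensional k (degreePart I D) :=
  Submodule.finiteDimensional_of_le inf_le_right

def quotHilbertSeries (I : Ideal (MvPolynomial σ k)) : PowerSeries ℤ :=
  PowerSeries.mk fun D =>
    (finrank k (homogeneousSubmodule σ k D) : ℤ) - finrank k (degreePart I D)

variable {I : Ideal (MvPolynomial σ k)} {f : MvPolynomial σ k} {e D : ℕ}

lemma degreePart_mono {J : Ideal (MvPolynomial σ k)} (h : I ≤ J) :
    degreePart I D ≤ degreePart J D :=
  inf_le_inf_right _ (Submodule.restrictScalars_mono k h)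

lemma degreePart_top :
    degreePart (⊤ : Ideal (MvPolynomial σ k)) D = homogeneousSubmodule σ k D := by
  simp [degreePart]

lemma degreePart_sup_span_singleton_of_le (hI : I.IsHomogeneous (homogeneousSubmodule σ k))
    (hf : f.IsHomogeneous e) (h : e ≤ D) :
    degreePart (I ⊔ Ideal.span {f}) D =
      degreePart I D ⊔ (homogeneousSubmodule σ k (D - e)).map (LinearMap.mulLeft k f) := by
  refine le_antisymm ?_ (sup_le (degreePart_mono le_sup_left) ?_)
  · rintro _ ⟨hx, hxD⟩
    obtain ⟨a, ha, _, hy, rfl⟩ := Submodule.mem_sup.1 hx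
    obtain ⟨c, rfl⟩ := Ideal.mem_span_singleton.1 hy
    rw [← homogeneousComponent_eq_self hxD, map_add, hf.homogeneousComponent_mul_of_le h]
    exact Submodule.add_mem_sup
      ⟨homogeneousComponent_mem_of_mem hI ha D, homogeneousComponent_mem D a⟩
      ⟨_, homogeneousComponent_mem _ c, rfl⟩
  · rintro _ ⟨c, hc, rfl⟩
    refine ⟨Ideal.mem_sup_right (Ideal.mul_mem_right c _ (Ideal.mem_span_singleton_self f)), ?_⟩
    simpa [Nat.add_sub_cancel' h] using hf.mul hc

lemma degreePart_sup_span_singleton_of_lt (hI : I.IsHomogeneous (homogeneousSubmodule σ k))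
    (hf : f.IsHomogeneous e) (h : D < e) :
    degreePart (I ⊔ Ideal.span {f}) D = degreePart I D := by
  refine le_antisymm ?_ (degreePart_mono le_sup_left)
  rintro _ ⟨hx, hxD⟩
  obtain ⟨a, ha, _, hy, rfl⟩ := Submodule.mem_sup.1 hx
  obtain ⟨c, rfl⟩ := Ideal.mem_span_singleton.1 hy
  rw [← homogeneousComponent_eq_self hxD, map_add, hf.homogeneousComponent_mul_of_lt h, add_zero]
  exact ⟨homogeneousComponent_mem_of_mem hI ha D, homogeneousComponent_mem D a⟩

lemma degreePart_inf_map_mulLeft (hf : f.IsHomogeneous e) (hreg : ∀ x, f * x ∈ I → x ∈ I)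
    (h : e ≤ D) :
    degreePart I D ⊓ (homogeneousSubmodule σ k (D - e)).map (LinearMap.mulLeft k f) =
      (degreePart I (D - e)).map (LinearMap.mulLeft k f) := by
  refine le_antisymm ?_ ?_
  · rintro _ ⟨⟨hcI, -⟩, c, hc, rfl⟩
    exact ⟨c, ⟨hreg c hcI, hc⟩, rfl⟩
  · rintro _ ⟨c, ⟨hcI, hc⟩, rfl⟩
    refine ⟨⟨Ideal.mul_mem_left _ f hcI, ?_⟩, c, hc, rfl⟩
    simpa [Nat.add_sub_cancel' h] using hf.mul hc

lemma finrank_degreePart_sup_span_singleton [Finite σ]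
    (hI : I.IsHomogeneous (homogeneousSubmodule σ k)) (hf : f.IsHomogeneous e)
    (hreg : ∀ x, f * x ∈ I → x ∈ I) (h : e ≤ D) :
    finrank k (degreePart (I ⊔ Ideal.span {f}) D) + finrank k (degreePart I (D - e)) =
      finrank k (degreePart I D) + finrank k (homogeneousSubmodule σ k (D - e)) := by
  rcases eq_or_ne f 0 with rfl | hf0
  · obtain rfl : I = ⊤ := eq_top_iff.2 fun x _ => hreg x (by simp)
    rw [top_sup_eq, degreePart_top, degreePart_top]
  have hmap (V : Submodule k (MvPolynomial σ k)) :
      finrank k (V.map (LinearMap.mulLeft k f)) = finrank k V :=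
    (Submodule.equivMapOfInjective _ (mul_right_injective₀ hf0) V).finrank_eq.symm
  have := Submodule.finrank_sup_add_finrank_inf_eq (degreePart I D)
    ((homogeneousSubmodule σ k (D - e)).map (LinearMap.mulLeft k f))
  rw [← degreePart_sup_span_singleton_of_le hI hf h, degreePart_inf_map_mulLeft hf hreg h,
    hmap, hmap] at this
  omega

lemma quotHilbertSeries_sup_span_singleton [Finite σ]
    (hI : I.IsHomogeneous (homogeneousSubmodule σ k)) (hf : f.IsHomogeneous e)
    (hreg : ∀ x, f * x ∈ I → x ∈ I) :
    quotHilbertSeries (I ⊔ Ideal.span {f}) = (1 - PowerSeries.X ^ e) * quotHilbertSeries I := by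
  ext D
  rw [sub_mul, one_mul, map_sub, PowerSeries.coeff_X_pow_mul']
  simp only [quotHilbertSeries, PowerSeries.coeff_mk]
  split_ifs with h
  · have := finrank_degreePart_sup_span_singleton hI hf hreg h
    omega
  · rw [degreePart_sup_span_singleton_of_lt hI hf (not_le.1 h), sub_zero]

lemma isHomogeneous_span_range {ι : Type*} {g : ι → MvPolynomial σ k} {e : ι → ℕ}
    (hg : ∀ i, (g i).IsHomogeneous (e i)) :
    (Ideal.span (Set.range g)).IsHomogeneous (homogeneousSubmodule σ k) :=
  Ideal.homogeneous_span _ _ (Set.forall_mem_range.2 fun i => ⟨e i, hg i⟩)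

lemma quotHilbertSeries_span_range [Finite σ] {M : ℕ} (g : Fin M → MvPolynomial σ k)
    (e : Fin M → ℕ) (hg : ∀ i, (g i).IsHomogeneous (e i))
    (hreg : IsWeaklyRegular (MvPolynomial σ k) (List.ofFn g)) :
    quotHilbertSeries (Ideal.span (Set.range g)) =
      (∏ i, (1 - PowerSeries.X ^ e i)) * quotHilbertSeries (⊥ : Ideal (MvPolynomial σ k)) := by
  induction M with
  | zero => simp
  | succ M ih =>
    rw [isWeaklyRegular_ofFn_succ_iff] at hreg
    rw [Ideal.span_range_fin_succ, quotHilbertSeries_sup_span_singleton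
      (isHomogeneous_span_range (g := fun i : Fin M => g i.castSucc) fun i => hg i.castSucc)
      (hg (Fin.last M)) hreg.2,
      ih _ (fun i => e i.castSucc) (fun i => hg i.castSucc) hreg.1, Fin.prod_univ_castSucc]
    ring

lemma degreePart_span_X_zero :
    degreePart (Ideal.span (Set.range X) : Ideal (MvPolynomial σ k)) 0 = ⊥ := by
  refine eq_bot_iff.2 fun f ⟨hf, hf0⟩ => ?_
  rw [homogeneousSubmodule_zero] at hf0
  obtain ⟨c, rfl⟩ := Submodule.mem_one.1 hf0
  have hker : Ideal.span (Set.range X) ≤ RingHom.ker (constantCoeff : MvPolynomial σ k →+* k) :=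
    Ideal.span_le.2 (Set.range_subset_iff.2 fun i => constantCoeff_X k i)
  have : c = 0 := by simpa using hker hf
  simp [this]

lemma degreePart_span_X_succ (D : ℕ) :
    degreePart (Ideal.span (Set.range X) : Ideal (MvPolynomial σ k)) (D + 1) =
      homogeneousSubmodule σ k (D + 1) := by
  refine inf_eq_right.2 ?_
  rw [← homogeneousSubmodule_one_pow, pow_succ', Submodule.mul_le]
  intro a ha b _
  rw [homogeneousSubmodule_one_eq_span_X] at ha
  exact Ideal.mul_mem_right b _ (Submodule.span_le_restrictScalars k _ _ ha)

lemma quotHilbertSeries_span_X :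
    quotHilbertSeries (Ideal.span (Set.range X) : Ideal (MvPolynomial σ k)) = 1 := by
  ext D
  rw [quotHilbertSeries, PowerSeries.coeff_mk, PowerSeries.coeff_one]
  rcases D with _ | D
  · rw [degreePart_span_X_zero, finrank_bot, homogeneousSubmodule_zero, Submodule.one_eq_span,
      finrank_span_singleton one_ne_zero]
    simp
  · rw [degreePart_span_X_succ]
    simp

lemma one_sub_X_pow_mul_quotHilbertSeries_bot [Fintype σ] :
    (1 - PowerSeries.X) ^ Fintype.card σ * quotHilbertSeries (⊥ : Ideal (MvPolynomial σ k)) =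
      1 := by
  let v := (Fintype.equivFin σ).symm
  have h := quotHilbertSeries_span_range (fun i => (X (v i) : MvPolynomial σ k)) (fun _ => 1)
    (fun _ => isHomogeneous_X k _) (isWeaklyRegular_ofFn_X v.injective)
  have hX : (Set.range fun i => (X (v i) : MvPolynomial σ k)) = Set.range X :=
    v.surjective.range_comp X
  rwa [hX, quotHilbertSeries_span_X, pow_one, Finset.prod_const,
    Finset.card_univ, Fintype.card_fin, eq_comm] at h

theorem quotHilbertSeries_span_range_eq_prod [Fintype σ] {M : ℕ} (g : Fin M → MvPolynomial σ k)
    (e : Fin M → ℕ) (hg : ∀ i, (g i).IsHomogeneous (e i))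
    (hreg : IsWeaklyRegular (MvPolynomial σ k) (List.ofFn g)) (hM : Fintype.card σ = M) :
    quotHilbertSeries (Ideal.span (Set.range g)) =
      ∏ i, ∑ j ∈ Finset.range (e i), PowerSeries.X ^ j := by
  subst hM
  calc quotHilbertSeries (Ideal.span (Set.range g))
      = (∏ i, (1 - PowerSeries.X ^ e i)) * quotHilbertSeries (⊥ : Ideal (MvPolynomial σ k)) :=
        quotHilbertSeries_span_range g e hg hreg
    _ = (∏ i, ∑ j ∈ Finset.range (e i), PowerSeries.X ^ j) *
          ((1 - PowerSeries.X) ^ Fintype.card σ * quotHilbertSeries ⊥) := by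
        simp_rw [← mul_neg_geom_sum, Finset.prod_mul_distrib, Finset.prod_const,
          Finset.card_univ, Fintype.card_fin]
        ring
    _ = _ := by rw [one_sub_X_pow_mul_quotHilbertSeries_bot, mul_one]

end HilbertSeries

end MvPolynomial

lemma PowerSeries.coeff_prod_geom_sum_eq_zero {ι R : Type*} [Fintype ι] [CommSemiring R]
    (e : ι → ℕ) (he : ∀ i, 1 ≤ e i) {D : ℕ} (hD : ∑ i, e i < D + Fintype.card ι) :
    coeff D (∏ i, ∑ j ∈ Finset.range (e i), (X : PowerSeries R) ^ j) = 0 := by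
  have hcoe : (∏ i, ∑ j ∈ Finset.range (e i), (X : PowerSeries R) ^ j) =
      ((∏ i, ∑ j ∈ Finset.range (e i), Polynomial.X ^ j : Polynomial R) : PowerSeries R) := by
    rw [← Polynomial.coeToPowerSeries.ringHom_apply]
    simp only [map_prod, map_sum, map_pow, Polynomial.coeToPowerSeries.ringHom_apply,
      Polynomial.coe_X]
  rw [hcoe, Polynomial.coeff_coe]
  refine Polynomial.coeff_eq_zero_of_natDegree_lt ((Polynomial.natDegree_prod_le _ _).trans_lt ?_)
  have hdeg (i : ι) :
      (∑ j ∈ Finset.range (e i), Polynomial.X ^ j : Polynomial R).natDegree ≤ e i - 1 :=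
    Polynomial.natDegree_sum_le_of_forall_le _ _ fun j hj =>
      (Polynomial.natDegree_X_pow_le j).trans (by rw [Finset.mem_range] at hj; omega)
  have hsum : ∑ i, (e i - 1) + Fintype.card ι = ∑ i, e i := by
    rw [← Finset.card_univ, Finset.card_eq_sum_ones, ← Finset.sum_add_distrib]
    exact Finset.sum_congr rfl fun i _ => Nat.sub_add_cancel (he i)
  calc _ ≤ ∑ i, (e i - 1) := Finset.sum_le_sum fun i _ => hdeg i
    _ < D := by omega

theorem MvPolynomial.homogeneousSubmodule_le_span_range {σ k : Type*} [Field k] [Fintype σ]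
    {M : ℕ} (g : Fin M → MvPolynomial σ k) (e : Fin M → ℕ) (he : ∀ i, 1 ≤ e i)
    (hg : ∀ i, (g i).IsHomogeneous (e i))
    (hreg : IsWeaklyRegular (MvPolynomial σ k) (List.ofFn g))
    (hM : Fintype.card σ = M) {D : ℕ} (hD : ∑ i, e i < D + M) :
    homogeneousSubmodule σ k D ≤ (Ideal.span (Set.range g)).restrictScalars k := by
  have hcoeff :=
    congrArg (PowerSeries.coeff D) (quotHilbertSeries_span_range_eq_prod g e hg hreg hM)
  rw [PowerSeries.coeff_prod_geom_sum_eq_zero e he (by simpa using hD), quotHilbertSeries,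
    PowerSeries.coeff_mk, sub_eq_zero, Nat.cast_inj] at hcoeff
  rw [← Submodule.eq_of_le_of_finrank_eq inf_le_right hcoeff.symm]
  exact inf_le_left

theorem stmt10_general (k : Type) [Field k] (n : ℕ)
    (g : Fin (n + 1) → MvPolynomial (Fin (n + 1)) k) (e : Fin (n + 1) → ℕ)
    (he : ∀ i, 1 ≤ e i) (hhom : ∀ i, (g i).IsHomogeneous (e i))
    (hreg : RingTheory.Sequence.IsRegular (MvPolynomial (Fin (n + 1)) k) (List.ofFn g)) :
    (maxIdeal k n) ^ ((∑ i, e i) - n) ≤ Ideal.span (Set.range g) ∧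
      ∀ (h : MvPolynomial (Fin (n + 1)) k) (D : ℕ), h.IsHomogeneous D →
        D + (n + 1) > ∑ i, e i → h ∈ Ideal.span (Set.range g) := by
  have hdeg (D : ℕ) (hD : ∑ i, e i < D + (n + 1)) :=
    homogeneousSubmodule_le_span_range g e he hhom hreg.toIsWeaklyRegular (Fintype.card_fin _) hD
  exact ⟨span_range_X_pow_le (hdeg _ (by omega)), fun h D hh hD => hdeg D hD hh⟩

theorem stmt10 (k : Type) [Field k] (p : ℕ) [Fact p.Prime] [CharP k p] (n : ℕ)
    (g : Fin (n + 1) → MvPolynomial (Fin (n + 1)) k) (e : Fin (n + 1) → ℕ)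
    (he : ∀ i, 1 ≤ e i) (hhom : ∀ i, (g i).IsHomogeneous (e i))
    (hreg : RingTheory.Sequence.IsRegular (MvPolynomial (Fin (n + 1)) k) (List.ofFn g)) :
    (maxIdeal k n) ^ ((∑ i, e i) - n) ≤ Ideal.span (Set.range g) ∧
      ∀ (h : MvPolynomial (Fin (n + 1)) k) (D : ℕ), h.IsHomogeneous D →
        D + (n + 1) > ∑ i, e i → h ∈ Ideal.span (Set.range g) :=
  stmt10_general k n g e he hhom hreg
end
end
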